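/- arXiv:1509.06236 — 2 statements merged into one kernel-verified Lean document; each statement's English description precedes it below -/
import Mathlib

section
/- For F ∈ GL⁺(n), the reduced energy W_red(F) := min over R ∈ SO(n) of ‖sym(RᵀF − 1)‖² equals the squared Euclidean (Frobenius) distance from F to the set SO(n)·(1 + so(n)) = { R(1 + A) : R ∈ SO(n), A skew-symmetric }. -/
open Matrix

noncomputable section

/-- Squared Frobenius norm. -/
def fnormSq {n : ℕ} (X : Matrix (Fin n) (Fin n) ℝ) : ℝ := ∑ i, ∑ j, (X i j)^2

/-- Symmetric part. -/
def symPart {n : ℕ} (X : Matrix (Fin n) (Fin n) ℝ) : Matrix (Fin n) (Fin n) ℝ :=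
  (1/2 : ℝ) • (X + Xᵀ)

/-- Membership in `SO(n)`. -/
def isSO {n : ℕ} (R : Matrix (Fin n) (Fin n) ℝ) : Prop := Rᵀ * R = 1 ∧ R.det = 1

namespace ReducedAux

variable {n : ℕ}

/-- Frobenius inner product. -/
def ip (X Y : Matrix (Fin n) (Fin n) ℝ) : ℝ := ∑ i, ∑ j, X i j * Y i j

lemma fnormSq_nonneg (X : Matrix (Fin n) (Fin n) ℝ) : 0 ≤ fnormSq X :=
  Finset.sum_nonneg fun _ _ => Finset.sum_nonneg fun _ _ => sq_nonneg _

lemma fnormSq_add (X Y : Matrix (Fin n) (Fin n) ℝ) :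
    fnormSq (X + Y) = fnormSq X + 2 * ip X Y + fnormSq Y := by
  have h : ∀ i j : Fin n, (X i j + Y i j)^2
      = X i j ^ 2 + 2 * (X i j * Y i j) + Y i j ^ 2 := fun i j => by ring
  simp only [fnormSq, ip, Matrix.add_apply, h, Finset.sum_add_distrib, ← Finset.mul_sum]

lemma ip_sym_skew (S T : Matrix (Fin n) (Fin n) ℝ) (hS : Sᵀ = S) (hT : Tᵀ = -T) :
    ip S T = 0 := by
  have h : ip S T = - ip S T := by
    have key : ∀ i j : Fin n, S i j * T i j = -(S j i * T j i) := by
      intro i j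
      have h1 : S i j = S j i := by
        conv_lhs => rw [← hS, Matrix.transpose_apply]
      have h2 : T i j = -T j i := by
        conv_lhs => rw [show T i j = Tᵀ j i from rfl, hT, Matrix.neg_apply]
      rw [h1, h2]; ring
    unfold ip
    calc ∑ i, ∑ j, S i j * T i j = ∑ i, ∑ j, -(S j i * T j i) :=
          Finset.sum_congr rfl fun i _ => Finset.sum_congr rfl fun j _ => key i j
      _ = -∑ i, ∑ j, S j i * T j i := by simp only [Finset.sum_neg_distrib]
      _ = -∑ i, ∑ j, S i j * T i j := by rw [Finset.sum_comm]
  linarith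

lemma fnormSq_trace (X : Matrix (Fin n) (Fin n) ℝ) : fnormSq X = (Xᵀ * X).trace := by
  simp only [Matrix.trace, Matrix.diag, Matrix.mul_apply, Matrix.transpose_apply, fnormSq, sq]
  exact Finset.sum_comm

lemma fnormSq_orth (R X : Matrix (Fin n) (Fin n) ℝ) (hR : Rᵀ * R = 1) :
    fnormSq (R * X) = fnormSq X := by
  rw [fnormSq_trace, fnormSq_trace, Matrix.transpose_mul, Matrix.mul_assoc,
    ← Matrix.mul_assoc Rᵀ R X, hR, Matrix.one_mul]

lemma symPart_sym (M : Matrix (Fin n) (Fin n) ℝ) : (symPart M)ᵀ = symPart M := by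
  unfold symPart
  rw [Matrix.transpose_smul, Matrix.transpose_add, Matrix.transpose_transpose, add_comm]

lemma skewPart_skew (M : Matrix (Fin n) (Fin n) ℝ) :
    (M - symPart M)ᵀ = -(M - symPart M) := by
  unfold symPart
  rw [Matrix.transpose_sub, Matrix.transpose_smul, Matrix.transpose_add,
    Matrix.transpose_transpose]
  ext i j
  simp [Matrix.sub_apply, Matrix.add_apply, Matrix.smul_apply, Matrix.neg_apply,
    Matrix.transpose_apply]
  ring

lemma key_decomp (M A : Matrix (Fin n) (Fin n) ℝ) (hA : Aᵀ = -A) :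
    fnormSq (M - A) = fnormSq (symPart M) + fnormSq (M - symPart M - A) := by
  have hd : M - A = symPart M + (M - symPart M - A) := by abel
  have hskew : (M - symPart M - A)ᵀ = -(M - symPart M - A) := by
    rw [Matrix.transpose_sub, skewPart_skew, hA]
    abel
  rw [hd, fnormSq_add, ip_sym_skew _ _ (symPart_sym M) hskew]
  ring

lemma step (F R A : Matrix (Fin n) (Fin n) ℝ) (hR : isSO R) (hA : Aᵀ = -A) :
    fnormSq (F - R * (1 + A)) = fnormSq (symPart (Rᵀ * F - 1))
      + fnormSq (Rᵀ * F - 1 - symPart (Rᵀ * F - 1) - A) := by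
  have hRR : R * Rᵀ = 1 := mul_eq_one_comm.mp hR.1
  have h1 : F - R * (1 + A) = R * (Rᵀ * F - 1 - A) := by
    rw [Matrix.mul_sub, Matrix.mul_sub, ← Matrix.mul_assoc, hRR, Matrix.one_mul,
      Matrix.mul_add, Matrix.mul_one]
    abel
  rw [h1, fnormSq_orth _ _ hR.1, key_decomp _ _ hA]

lemma isCompact_SO : IsCompact {R : Matrix (Fin n) (Fin n) ℝ | isSO R} := by
  have hbox : IsCompact (Set.pi Set.univ fun _ : Fin n =>
      Set.pi Set.univ fun _ : Fin n => Set.Icc (-1 : ℝ) 1) :=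
    isCompact_univ_pi fun _ => isCompact_univ_pi fun _ => isCompact_Icc
  apply hbox.of_isClosed_subset
  · have h1 : IsClosed {R : Matrix (Fin n) (Fin n) ℝ | Rᵀ * R = 1} :=
      isClosed_eq (continuous_id.matrix_transpose.matrix_mul continuous_id) continuous_const
    have h2 : IsClosed {R : Matrix (Fin n) (Fin n) ℝ | R.det = 1} :=
      isClosed_eq continuous_id.matrix_det continuous_const
    exact (h1.inter h2)
  · intro R hR
    simp only [Set.mem_pi, Set.mem_univ, forall_true_left, Set.mem_Icc]
    intro i j
    have hdiag : ∑ k, R k j * R k j = 1 := by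
      have := congrFun (congrFun hR.1 j) j
      have h2 := this
      exact h2.trans (Matrix.one_apply_eq j)
    have hle : (R i j)^2 ≤ 1 := by
      rw [← hdiag]
      have : (R i j)^2 = R i j * R i j := sq (R i j) ▸ by ring
      rw [this]
      exact Finset.single_le_sum (fun k _ => mul_self_nonneg (R k j)) (Finset.mem_univ i)
    constructor <;> nlinarith [hle]

end ReducedAux

open ReducedAux in
/-- For `F ∈ GL⁺(n)`, the reduced energy `min_{R ∈ SO(n)} ‖sym(RᵀF − 1)‖²`
equals the squared euclidean (Frobenius) distance from `F` to the set
`SO(n)(1 + so(n)) = { R(1 + A) : R ∈ SO(n), A skew }`. -/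
theorem reduced_energy_eq_distSq_to_SO_one_add_so
    (n : ℕ) (F : Matrix (Fin n) (Fin n) ℝ) (hF : 0 < F.det) :
    ∃ m : ℝ,
      IsLeast {v : ℝ | ∃ R : Matrix (Fin n) (Fin n) ℝ, isSO R ∧
        v = fnormSq (symPart (Rᵀ * F - 1))} m ∧
      IsGLB {v : ℝ | ∃ R A : Matrix (Fin n) (Fin n) ℝ, isSO R ∧ Aᵀ = -A ∧
        v = fnormSq (F - R * (1 + A))} m := by
  classical
  have hSOne : isSO (1 : Matrix (Fin n) (Fin n) ℝ) := ⟨by simp, by simp⟩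
  have hcont : Continuous fun R : Matrix (Fin n) (Fin n) ℝ =>
      fnormSq (symPart (Rᵀ * F - 1)) := by
    have hg : Continuous fun R : Matrix (Fin n) (Fin n) ℝ => symPart (Rᵀ * F - 1) := by
      have hb : Continuous fun R : Matrix (Fin n) (Fin n) ℝ => Rᵀ * F - 1 :=
        (continuous_id.matrix_transpose.matrix_mul continuous_const).sub continuous_const
      unfold symPart
      exact (hb.add hb.matrix_transpose).const_smul (1/2 : ℝ)
    have hf : Continuous fun X : Matrix (Fin n) (Fin n) ℝ => fnormSq X := by
      unfold fnormSq
      exact continuous_finset_sum _ fun i _ => continuous_finset_sum _ fun j _ =>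
        ((continuous_apply j).comp (continuous_apply i)).pow 2
    exact hf.comp hg
  obtain ⟨R₀, hR₀, hmin⟩ := isCompact_SO.exists_isMinOn ⟨1, hSOne⟩ hcont.continuousOn
  set f : Matrix (Fin n) (Fin n) ℝ → ℝ := fun R => fnormSq (symPart (Rᵀ * F - 1)) with hf
  refine ⟨f R₀, ⟨⟨R₀, hR₀, rfl⟩, ?_⟩, ?_⟩
  · rintro v ⟨R, hR, rfl⟩
    exact hmin hR
  · apply IsLeast.isGLB
    constructor
    · refine ⟨R₀, (R₀ᵀ * F - 1) - symPart (R₀ᵀ * F - 1), hR₀, skewPart_skew _, ?_⟩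
      rw [step F R₀ _ hR₀ (skewPart_skew _), sub_self]
      simp [hf, fnormSq]
    · rintro v ⟨R, A, hR, hA, rfl⟩
      calc f R₀ ≤ f R := hmin hR
        _ ≤ fnormSq (F - R * (1 + A)) := by
            rw [step F R A hR hA]
            have := fnormSq_nonneg (Rᵀ * F - 1 - symPart (Rᵀ * F - 1) - A)
            linarith
end
end

section
/- For any μ > 0 and μ_c ≥ 0 with μ > μ_c, and any F ∈ GL⁺(n), let λ = μ/(μ − μ_c); then the minimizers over R ∈ SO(n) of W_{μ,μ_c}(R;F) := μ‖sym(RᵀF−1)‖² + μ_c‖skew(RᵀF−1)‖² coincide with the minimizers over R ∈ SO(n) of W_{1,0}(R; F/λ) := ‖sym(Rᵀ(F/λ) − 1)‖². -/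
open Matrix

noncomputable section

/-- Skew-symmetric part. -/
def skewPart {n : ℕ} (X : Matrix (Fin n) (Fin n) ℝ) : Matrix (Fin n) (Fin n) ℝ :=
  (1/2 : ℝ) • (X - Xᵀ)

section Aux

variable {n : ℕ}

lemma fnormSq_transpose (X : Matrix (Fin n) (Fin n) ℝ) : fnormSq Xᵀ = fnormSq X := by
  unfold fnormSq
  rw [Finset.sum_comm]
  rfl

lemma fnormSq_eq_trace (X : Matrix (Fin n) (Fin n) ℝ) : fnormSq X = (Xᵀ * X).trace := by
  unfold fnormSq
  simp [Matrix.trace, Matrix.mul_apply, Matrix.diag, sq]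
  rw [Finset.sum_comm]

lemma fnormSq_smul (a : ℝ) (X : Matrix (Fin n) (Fin n) ℝ) :
    fnormSq (a • X) = a^2 * fnormSq X := by
  unfold fnormSq
  simp [mul_pow, Finset.mul_sum]

lemma fnormSq_sub_one (A : Matrix (Fin n) (Fin n) ℝ) :
    fnormSq (A - 1) = fnormSq A - 2 * A.trace + n := by
  unfold fnormSq
  have h : ∀ i j, ((A - 1) i j)^2 = (A i j)^2
      - 2 * (A i j * (1 : Matrix (Fin n) (Fin n) ℝ) i j)
      + ((1 : Matrix (Fin n) (Fin n) ℝ) i j)^2 := by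
    intro i j; simp [Matrix.sub_apply]; ring
  have h1 : ∀ i : Fin n, ∑ j, A i j * (1 : Matrix (Fin n) (Fin n) ℝ) i j = A i i := by
    intro i; simp [Matrix.one_apply, mul_ite]
  have h2 : ∀ i : Fin n, ∑ j, ((1 : Matrix (Fin n) (Fin n) ℝ) i j)^2 = 1 := by
    intro i; simp [Matrix.one_apply, ite_pow]
  simp only [h, Finset.sum_add_distrib, Finset.sum_sub_distrib, ← Finset.mul_sum, h1, h2,
    Finset.sum_const, Finset.card_univ, Fintype.card_fin, nsmul_eq_mul, mul_one]
  simp [Matrix.trace, Matrix.diag]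

lemma symPart_sub_one (X : Matrix (Fin n) (Fin n) ℝ) :
    symPart (X - 1) = symPart X - 1 := by
  unfold symPart
  ext i j
  simp [Matrix.sub_apply, Matrix.add_apply, Matrix.smul_apply, Matrix.transpose_apply,
    Matrix.one_apply]
  by_cases hij : i = j <;> simp [hij, eq_comm] <;> ring

lemma skewPart_sub_one (X : Matrix (Fin n) (Fin n) ℝ) :
    skewPart (X - 1) = skewPart X := by
  unfold skewPart
  ext i j
  simp [Matrix.sub_apply, Matrix.smul_apply]

lemma symPart_smul (a : ℝ) (X : Matrix (Fin n) (Fin n) ℝ) :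
    symPart (a • X) = a • symPart X := by
  unfold symPart
  ext i j
  simp [Matrix.smul_apply, Matrix.add_apply]
  ring

lemma trace_symPart (X : Matrix (Fin n) (Fin n) ℝ) : (symPart X).trace = X.trace := by
  unfold symPart
  simp [Matrix.trace_smul, Matrix.trace_add, Matrix.trace_transpose]
  ring

lemma fnormSq_split (X : Matrix (Fin n) (Fin n) ℝ) :
    fnormSq (symPart X) + fnormSq (skewPart X) = fnormSq X := by
  have h : ∀ i j, 2*(symPart X i j)^2 + 2*(skewPart X i j)^2
      = (X i j)^2 + (Xᵀ i j)^2 := by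
    intro i j
    simp [symPart, skewPart, Matrix.smul_apply, Matrix.add_apply, Matrix.sub_apply]
    ring
  have key : 2*(fnormSq (symPart X) + fnormSq (skewPart X)) = fnormSq X + fnormSq Xᵀ := by
    unfold fnormSq
    rw [mul_add]
    simp only [Finset.mul_sum]
    rw [← Finset.sum_add_distrib, ← Finset.sum_add_distrib]
    apply Finset.sum_congr rfl
    intro i _
    rw [← Finset.sum_add_distrib, ← Finset.sum_add_distrib]
    exact Finset.sum_congr rfl fun j _ => h i j
  have ht := fnormSq_transpose X
  linarith

lemma fnormSq_ortho_mul (R F : Matrix (Fin n) (Fin n) ℝ) (hR : Rᵀ * R = 1) :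
    fnormSq (Rᵀ * F) = fnormSq F := by
  have hRR : R * Rᵀ = 1 := mul_eq_one_comm.mp hR
  rw [fnormSq_eq_trace, fnormSq_eq_trace F, Matrix.transpose_mul, Matrix.transpose_transpose,
    Matrix.mul_assoc, ← Matrix.mul_assoc R, hRR, Matrix.one_mul]

lemma energy_eq (μ μc lam : ℝ) (hne : μ - μc ≠ 0) (hμ : μ ≠ 0)
    (hlam : lam = μ / (μ - μc))
    (R F : Matrix (Fin n) (Fin n) ℝ) (hR : Rᵀ * R = 1) :
    μ * fnormSq (symPart (Rᵀ * F - 1)) + μc * fnormSq (skewPart (Rᵀ * F - 1)) =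
    ((μ - μc) * lam^2) * fnormSq (symPart (Rᵀ * (lam⁻¹ • F) - 1))
      + (μ * n + μc * fnormSq F - (μ - μc) * lam^2 * n) := by
  set X := Rᵀ * F with hX
  have hXF : Rᵀ * (lam⁻¹ • F) = lam⁻¹ • X := by rw [Matrix.mul_smul]
  have hskew : fnormSq (skewPart X) = fnormSq X - fnormSq (symPart X) := by
    have := fnormSq_split X; linarith
  have hXn : fnormSq X = fnormSq F := fnormSq_ortho_mul R F hR
  rw [symPart_sub_one, skewPart_sub_one, hXF, symPart_sub_one, symPart_smul,
      fnormSq_sub_one, fnormSq_sub_one, fnormSq_smul, Matrix.trace_smul, trace_symPart,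
      hskew, hXn, smul_eq_mul]
  subst hlam
  field_simp
  ring

end Aux

/-- Parameter reduction: for `μ > μ_c ≥ 0` and `λ = μ/(μ−μ_c)`, the minimizers
over `SO(n)` of `W_{μ,μ_c}(R;F) = μ‖sym(RᵀF−1)‖² + μ_c‖skew(RᵀF−1)‖²` coincide
with the minimizers over `SO(n)` of `W_{1,0}(R;F/λ) = ‖sym(Rᵀ(F/λ)−1)‖²`. -/
theorem parameter_reduction_argmin_eq
    (n : ℕ) (μ μc : ℝ) (hμ : 0 < μ) (hμc : 0 ≤ μc) (hlt : μc < μ)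
    (F : Matrix (Fin n) (Fin n) ℝ) (hF : 0 < F.det)
    (lam : ℝ) (hlam : lam = μ / (μ - μc)) :
    {R : Matrix (Fin n) (Fin n) ℝ | isSO R ∧ ∀ R', isSO R' →
        μ * fnormSq (symPart (Rᵀ * F - 1)) + μc * fnormSq (skewPart (Rᵀ * F - 1)) ≤
        μ * fnormSq (symPart (R'ᵀ * F - 1)) + μc * fnormSq (skewPart (R'ᵀ * F - 1))} =
    {R : Matrix (Fin n) (Fin n) ℝ | isSO R ∧ ∀ R', isSO R' →
        fnormSq (symPart (Rᵀ * (lam⁻¹ • F) - 1)) ≤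
        fnormSq (symPart (R'ᵀ * (lam⁻¹ • F) - 1))} := by
  have hsub : 0 < μ - μc := sub_pos.mpr hlt
  have hne : μ - μc ≠ 0 := ne_of_gt hsub
  have hlampos : 0 < lam := by rw [hlam]; exact div_pos hμ hsub
  have hc : 0 < (μ - μc) * lam^2 := by positivity
  ext R
  simp only [Set.mem_setOf_eq]
  constructor
  · rintro ⟨hR, hmin⟩
    refine ⟨hR, fun R' hR' => ?_⟩
    have h1 := energy_eq μ μc lam hne (ne_of_gt hμ) hlam R F hR.1
    have h2 := energy_eq μ μc lam hne (ne_of_gt hμ) hlam R' F hR'.1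
    have hle := hmin R' hR'
    rw [h1, h2] at hle
    nlinarith [hc]
  · rintro ⟨hR, hmin⟩
    refine ⟨hR, fun R' hR' => ?_⟩
    rw [energy_eq μ μc lam hne (ne_of_gt hμ) hlam R F hR.1,
        energy_eq μ μc lam hne (ne_of_gt hμ) hlam R' F hR'.1]
    have hle := hmin R' hR'
    nlinarith [hc]
end
end
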